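/- Let G be a 2-connected graph with a 2-cut {x,y} separating G into parts H_1 and H_2 (each H_i is induced on a component of G−{x,y} together with x,y). If H_1−xy contains two x–y paths whose lengths differ by 2, and H_2−xy is non-bipartite and 2-connected after adding xy, then G contains two cycles of consecutive even lengths. -/

import Mathlib

open SimpleGraph

/-- `G` contains two cycles of consecutive even lengths `2m` and `2m+2`. -/
def HasTwoConsecEvenCycles {V : Type*} (G : SimpleGraph V) : Prop :=
  ∃ (u v : V) (c₁ : G.Walk u u) (c₂ : G.Walk v v) (m : ℕ),
    c₁.IsCycle ∧ c₂.IsCycle ∧ 0 < m ∧ c₁.length = 2 * m ∧ c₂.length = 2 * m + 2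

/-- `G` is `k`-connected: more than `k` vertices, and deleting any set of
fewer than `k` vertices leaves a connected graph. -/
def KConnected {V : Type*} (k : ℕ) (G : SimpleGraph V) : Prop :=
  k + 1 ≤ Nat.card V ∧ ∀ S : Set V, S.ncard < k → (G.induce Sᶜ).Connected

/-!
Let `r` be an `x`–`y` path of `H₂ - xy`. The two sides meet only in `{x, y}`, so `p ∪ r` and
`q ∪ r` are cycles, of lengths `|p| + |r|` and `|p| + |r| + 2`; both are even once
`|r| ≡ |p| (mod 2)`. A path `r` of either parity exists because `H₂ + xy` is 2-connected and
`H₂ - xy` contains an odd cycle `C`: by Menger's theorem for two paths there are disjoint paths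
from `x` and from `y` to `C`, and joining them along the two arcs of `C` gives `x`–`y` paths
whose lengths differ by the odd number `|C| - 2 · |arc|`.
-/

namespace SimpleGraph

variable {V : Type*} {G G' : SimpleGraph V}

namespace Walk

variable {a b c u v w x y : V}

theorem IsPath.start_notMem_support_tail {p : G.Walk u v} (hp : p.IsPath) :
    u ∉ p.support.tail := by
  have hnd := hp.support_nodup
  rw [← cons_tail_support, List.nodup_cons] at hnd
  exact hnd.1

theorem IsPath.append {p : G.Walk u v} {q : G.Walk v w} (hp : p.IsPath) (hq : q.IsPath)
    (h : ∀ x ∈ p.support, x ∈ q.support → x = v) : (p.append q).IsPath := by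
  rw [isPath_def, support_append]
  refine hp.support_nodup.append hq.support_nodup.tail fun x hxp hxq => ?_
  obtain rfl := h x hxp (List.mem_of_mem_tail hxq)
  exact hq.start_notMem_support_tail hxq

theorem exists_eq_append_of_not_isPath (p : G.Walk u v) (hp : ¬ p.IsPath) :
    ∃ (w : V) (p₁ : G.Walk u w) (c : G.Walk w w) (p₂ : G.Walk w v),
      ¬ c.Nil ∧ p = p₁.append (c.append p₂) := by
  classical
  induction p with
  | nil => exact absurd .nil hp
  | @cons u _ _ hadj p ih =>
    by_cases hp' : p.IsPath
    · have hu : u ∈ p.support := by_contra fun hu => hp (hp'.cons hu)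
      exact ⟨u, nil, cons hadj (p.takeUntil u hu), p.dropUntil u hu, not_nil_cons,
        by simp [take_spec]⟩
    · obtain ⟨w, p₁, c, p₂, hc, rfl⟩ := ih hp'
      exact ⟨w, cons hadj p₁, c, p₂, hc, rfl⟩

/-- Split an odd closed walk that is not a cycle at a repeated vertex: one of the two shorter
closed walks is odd. -/
theorem exists_isCycle_odd_length (c : G.Walk u u) (hc : Odd c.length) :
    ∃ (w : V) (d : G.Walk w w), d.IsCycle ∧ Odd d.length := by
  induction hn : c.length using Nat.strong_induction_on generalizing u with
  | _ n ih =>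
  cases c with
  | nil => simp at hc
  | cons hadj p =>
    by_cases hp : p.IsPath
    · refine ⟨u, _, isCycle_iff_isPath_tail_and_le_length.mpr ⟨by simpa using hp, ?_⟩, hc⟩
      have hp0 : p.length ≠ 0 := fun h0 => hadj.ne (eq_of_length_eq_zero h0).symm
      rw [length_cons] at hc ⊢
      obtain ⟨k, hk⟩ := hc
      omega
    · obtain ⟨w, p₁, d, p₂, hd, rfl⟩ := p.exists_eq_append_of_not_isPath hp
      have hd0 : d.length ≠ 0 := fun h0 => hd (length_eq_zero_iff.mp h0)
      simp only [length_cons, length_append] at hn hc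
      rcases Nat.even_or_odd d.length with he | ho
      · exact ih (p₁.length + p₂.length + 1) (by omega) (cons hadj (p₁.append p₂))
          (by simp only [length_cons, length_append]; grind) (by simp)
      · exact ih _ (by omega) d ho rfl

theorem exists_mem_set_forall_mem_takeUntil_imp_eq [DecidableEq V] (p : G.Walk u v)
    {S : Set V} (h : ∃ x ∈ p.support, x ∈ S) :
    ∃ x ∈ S, ∃ hx : x ∈ p.support, ∀ t ∈ (p.takeUntil x hx).support, t ∈ S → t = x := by
  classical
  obtain ⟨x, hx, hxp, hfirst⟩ := p.exists_mem_support_forall_mem_support_imp_eq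
    {t ∈ p.support.toFinset | t ∈ S} (by obtain ⟨x, hx, hxS⟩ := h; exact ⟨x, by simp [hx, hxS]⟩)
  refine ⟨x, (by simpa using hx : _ ∧ _).2, hxp, fun t ht htS => hfirst t ?_ ht⟩
  simpa using ⟨p.support_takeUntil_subset_support hxp ht, htS⟩

theorem mk_notMem_edges_of_forall_mem_imp_eq {S : Set V} (p : G.Walk a b) (hu : u ∈ S)
    (hv : v ∈ S) (huv : u ≠ v) (h : ∀ x ∈ p.support, x ∈ S → x = c) : s(u, v) ∉ p.edges :=
  fun he => huv <| (h u (p.fst_mem_support_of_mem_edges he) hu).trans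
    (h v (p.snd_mem_support_of_mem_edges he) hv).symm

theorem two_le_length_of_mk_notMem_edges {p : G.Walk x y} (hxy : x ≠ y)
    (h : s(x, y) ∉ p.edges) : 2 ≤ p.length := by
  cases p with
  | nil => exact absurd rfl hxy
  | cons _ p =>
    cases p with
    | nil => simp at h
    | cons _ _ => simp

theorem IsPath.isCycle_append_reverse {p r : G.Walk x y} (hp : p.IsPath) (hr : r.IsPath)
    (hxy : x ≠ y) (hpxy : s(x, y) ∉ p.edges)
    (h : ∀ v ∈ p.support, v ∈ r.support → v = x ∨ v = y) : (p.append r.reverse).IsCycle := by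
  refine hp.isCycle_append hr.reverse (fun v hvp hvr => ?_)
    (.inl (two_le_length_of_mk_notMem_edges hxy hpxy))
  have hvr' : v ∈ r.support := by simpa [support_reverse] using List.mem_of_mem_tail hvr
  rcases h v (List.mem_of_mem_tail hvp) hvr' with rfl | rfl
  · exact hp.start_notMem_support_tail hvp
  · exact hr.reverse.start_notMem_support_tail hvr

theorem IsCycle.exists_arcs {c : G.Walk u u} (hc : c.IsCycle) (hx : x ∈ c.support)
    (hy : y ∈ c.support) (hxy : x ≠ y) :
    ∃ d₁ d₂ : G.Walk x y, d₁.IsPath ∧ d₂.IsPath ∧ d₁.support ⊆ c.support ∧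
      d₂.support ⊆ c.support ∧ d₁.edges ⊆ c.edges ∧ d₂.edges ⊆ c.edges ∧
      d₁.length + d₂.length = c.length := by
  classical
  set c' := c.rotate x hx
  have hc' : c'.IsCycle := hc.rotate hx
  have hy' : y ∈ c'.support := (c.mem_support_rotate_iff x hx).mpr hy
  have hsupp : c'.support ⊆ c.support := fun z hz => (c.mem_support_rotate_iff x hx).mp hz
  have hedges : c'.edges ⊆ c.edges := fun e he => (c.rotate_edges x hx).mem_iff.mp he
  have hspec := c'.take_spec hy'
  refine ⟨c'.takeUntil y hy', (c'.dropUntil y hy').reverse, hc'.isPath_takeUntil hy',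
    (IsCycle.isPath_of_append_right (not_nil_of_ne hxy) (hspec ▸ hc')).reverse,
    fun z hz => hsupp (c'.support_takeUntil_subset_support hy' hz),
    fun z hz => hsupp (c'.support_dropUntil_subset_support hy' (by simpa [support_reverse] using hz)),
    fun e he => hedges (c'.edges_takeUntil_subset_edges hy' he),
    fun e he => hedges (c'.edges_dropUntil_subset_edges hy' (by simpa [edges_reverse] using he)),
    ?_⟩
  rw [length_reverse, ← length_append, hspec, length_rotate]

def IsPathBetween (p : G.Walk u v) (X Y : Set V) : Prop :=
  p.IsPath ∧ (∀ x ∈ p.support, x ∈ X ↔ x = u) ∧ (∀ x ∈ p.support, x ∈ Y ↔ x = v)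

variable {X Y : Set V}

theorem IsPathBetween.reverse {p : G.Walk u v} (hp : p.IsPathBetween X Y) :
    p.reverse.IsPathBetween Y X := by
  simpa [IsPathBetween, support_reverse, and_comm (a := ∀ x ∈ p.support, x ∈ X ↔ x = u)] using hp

theorem IsPathBetween.mapLe {p : G.Walk u v} (hp : p.IsPathBetween X Y) (h : G ≤ G') :
    (p.mapLe h).IsPathBetween X Y := by
  simpa [IsPathBetween, support_mapLe_eq_support] using hp

theorem exists_isPathBetween (p : G.Walk a b) (ha : a ∈ X) (hb : b ∈ Y) :
    ∃ (a' b' : V) (q : G.Walk a' b'), q.IsPathBetween X Y ∧ q.support ⊆ p.support := by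
  classical
  obtain ⟨b', hb'Y, hb'p, hY⟩ :=
    p.bypass.exists_mem_set_forall_mem_takeUntil_imp_eq ⟨b, p.bypass.end_mem_support, hb⟩
  set q := p.bypass.takeUntil b' hb'p
  obtain ⟨a', ha'X, ha'q, hX⟩ :=
    q.reverse.exists_mem_set_forall_mem_takeUntil_imp_eq ⟨a, by simp, ha⟩
  have hsub : (q.reverse.takeUntil a' ha'q).reverse.support ⊆ q.support := by
    simpa [support_reverse] using q.reverse.support_takeUntil_subset_support ha'q
  refine ⟨a', b', (q.reverse.takeUntil a' ha'q).reverse, ⟨?_, fun x hx => ?_, fun x hx => ?_⟩, ?_⟩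
  · exact ((p.bypass_isPath.takeUntil hb'p).reverse.takeUntil ha'q).reverse
  · exact ⟨hX x (by simpa [support_reverse] using hx), fun h => h ▸ ha'X⟩
  · exact ⟨hY x (hsub hx), fun h => h ▸ hb'Y⟩
  · exact fun x hx =>
      support_bypass_subset_support p (p.bypass.support_takeUntil_subset_support hb'p (hsub hx))

theorem IsPathBetween.isPath_append_append {T : Set V} {c₁ c₂ : V} {p : G.Walk c₁ x}
    {q : G.Walk c₂ y} (hp : p.IsPathBetween T {x, y}) (hq : q.IsPathBetween T {x, y})
    (hpq : p.support.Disjoint q.support) (hxy : x ≠ y) {d : G.Walk c₁ c₂} (hd : d.IsPath)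
    (hdT : ∀ z ∈ d.support, z ∈ T) (hdxy : s(x, y) ∉ d.edges) :
    (p.reverse.append (d.append q)).IsPath ∧ s(x, y) ∉ (p.reverse.append (d.append q)).edges := by
  have hdq : (d.append q).IsPath := hd.append hq.1 fun z hzd hzq => (hq.2.1 z hzq).mp (hdT z hzd)
  refine ⟨hp.1.reverse.append hdq fun z hzp hz => ?_, ?_⟩
  · rw [support_reverse, List.mem_reverse] at hzp
    rcases (mem_support_append_iff _ _).mp hz with hz | hz
    · exact (hp.2.1 z hzp).mp (hdT z hz)
    · exact absurd hz (hpq hzp)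
  · simp only [edges_append, edges_reverse, List.mem_append, List.mem_reverse]
    rintro (h | h | h)
    · exact hxy ((hp.2.2 y (p.snd_mem_support_of_mem_edges h)).mp (by simp)).symm
    · exact hdxy h
    · exact hxy ((hq.2.2 x (q.fst_mem_support_of_mem_edges h)).mp (by simp))

end Walk

theorem exists_isCycle_odd_length_of_not_colorable_two (h : ¬ G.Colorable 2) :
    ∃ (u : V) (c : G.Walk u u), c.IsCycle ∧ Odd c.length := by
  obtain ⟨u, c, hc⟩ : ∃ (u : V) (c : G.Walk u u), Odd c.length := by
    simpa [two_colorable_iff_forall_loop_even, Nat.not_even_iff_odd] using h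
  exact c.exists_isCycle_odd_length hc

def HasTwoDisjointPaths (G : SimpleGraph V) (X Y : Set V) : Prop :=
  ∃ (a₁ b₁ a₂ b₂ : V) (p₁ : G.Walk a₁ b₁) (p₂ : G.Walk a₂ b₂),
    p₁.IsPathBetween X Y ∧ p₂.IsPathBetween X Y ∧ p₁.support.Disjoint p₂.support

def Separates (G : SimpleGraph V) (S X Y : Set V) : Prop :=
  ∀ a ∈ X, ∀ b ∈ Y, ∀ p : G.Walk a b, ∃ x ∈ p.support, x ∈ S

variable {S X Y : Set V} {e : Sym2 V} {s u v w x y : V}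

theorem HasTwoDisjointPaths.symm (h : G.HasTwoDisjointPaths X Y) :
    G.HasTwoDisjointPaths Y X := by
  obtain ⟨a₁, b₁, a₂, b₂, p₁, p₂, hp₁, hp₂, hdisj⟩ := h
  exact ⟨b₁, a₁, b₂, a₂, p₁.reverse, p₂.reverse, hp₁.reverse, hp₂.reverse,
    by simpa [Walk.support_reverse] using hdisj⟩

theorem HasTwoDisjointPaths.mono (h : G.HasTwoDisjointPaths X Y) (hle : G ≤ G') :
    G'.HasTwoDisjointPaths X Y := by
  obtain ⟨a₁, b₁, a₂, b₂, p₁, p₂, hp₁, hp₂, hdisj⟩ := h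
  exact ⟨a₁, b₁, a₂, b₂, p₁.mapLe hle, p₂.mapLe hle, hp₁.mapLe hle, hp₂.mapLe hle,
    by simpa [Walk.support_mapLe_eq_support] using hdisj⟩

theorem HasTwoDisjointPaths.exists_of_pair {t : V} (h : G.HasTwoDisjointPaths X {s, t}) :
    ∃ (a a' : V) (p : G.Walk a s) (q : G.Walk a' t), p.IsPathBetween X {s, t} ∧
      q.IsPathBetween X {s, t} ∧ p.support.Disjoint q.support := by
  obtain ⟨a₁, b₁, a₂, b₂, p₁, p₂, hp₁, hp₂, hdisj⟩ := h
  have hb : b₁ ≠ b₂ := fun h => hdisj p₁.end_mem_support (h ▸ p₂.end_mem_support)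
  have hb₁ : b₁ = s ∨ b₁ = t := (hp₁.2.2 b₁ p₁.end_mem_support).mpr rfl
  have hb₂ : b₂ = s ∨ b₂ = t := (hp₂.2.2 b₂ p₂.end_mem_support).mpr rfl
  rcases hb₁ with rfl | rfl <;> rcases hb₂ with rfl | rfl
  · exact absurd rfl hb
  · exact ⟨a₁, a₂, p₁, p₂, hp₁, hp₂, hdisj⟩
  · exact ⟨a₂, a₁, p₂, p₁, hp₂, hp₁, hdisj.symm⟩
  · exact absurd rfl hb

theorem not_separates_iff :
    ¬ G.Separates S X Y ↔ ∃ a ∈ X, ∃ b ∈ Y, ∃ p : G.Walk a b, ∀ x ∈ p.support, x ∉ S := by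
  simp [Separates]

theorem separates_comm : G.Separates S X Y ↔ G.Separates S Y X :=
  ⟨fun h b hb a ha p => by simpa [Walk.support_reverse] using h a ha b hb p.reverse,
    fun h a ha b hb p => by simpa [Walk.support_reverse] using h b hb a ha p.reverse⟩

theorem Separates.insert_of_deleteEdges (h : (G.deleteEdges {e}).Separates S X Y) (hw : w ∈ e) :
    G.Separates (insert w S) X Y := by
  intro a ha b hb p
  by_cases hwp : w ∈ p.support
  · exact ⟨w, hwp, Set.mem_insert _ _⟩
  · obtain ⟨x, hx, hxS⟩ :=
      h a ha b hb (p.toDeleteEdge e fun he => hwp (p.mem_support_of_mem_edges he hw))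
    exact ⟨x, by simpa using hx, Set.mem_insert_of_mem _ hxS⟩

theorem Separates.disjoint_support (hs : G.Separates {s} X Y) {a b c : V} (ha : a ∈ X)
    (hb : b ∈ Y) {α : G.Walk a s} (hα : α.IsPath) (β : G.Walk b c) (hβ : s ∉ β.support) :
    α.support.Disjoint β.support := by
  classical
  intro w hwα hwβ
  obtain ⟨x, hx, rfl⟩ :=
    hs a ha b hb ((α.takeUntil w hwα).append (β.takeUntil w hwβ).reverse)
  rcases (Walk.mem_support_append_iff _ _).mp hx with hx | hx
  · by_cases hws : x = w
    · exact hβ (hws ▸ hwβ)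
    · exact Walk.endpoint_notMem_support_takeUntil hα hwα hws hx
  · simp only [Walk.support_reverse, List.mem_reverse] at hx
    exact hβ (β.support_takeUntil_subset_support hwβ hx)

theorem not_separates_of_connected_induce_compl (hS : (G.induce Sᶜ).Connected)
    (hX : ∃ a ∈ X, a ∉ S) (hY : ∃ b ∈ Y, b ∉ S) : ¬ G.Separates S X Y := by
  obtain ⟨a, ha, haS⟩ := hX
  obtain ⟨b, hb, hbS⟩ := hY
  obtain ⟨p⟩ := hS.preconnected ⟨a, haS⟩ ⟨b, hbS⟩
  refine not_separates_iff.mpr ⟨a, ha, b, hb, p.map (Embedding.induce Sᶜ).toHom, fun z hz => ?_⟩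
  replace hz : z ∈ (p.map (Embedding.induce Sᶜ).toHom).support := hz
  rw [Walk.support_map, List.mem_map] at hz
  obtain ⟨⟨z, hz⟩, -, rfl⟩ := hz
  exact hz

theorem exists_ends_of_separates_deleteEdges (hs : (G.deleteEdges {e}).Separates {s} X Y)
    (hG : ¬ G.Separates {s} X Y) (he : e ∈ G.edgeSet) :
    ∃ u v, e = s(u, v) ∧ ¬ (G.deleteEdges {e}).Separates {s} X {u} ∧
      ¬ (G.deleteEdges {e}).Separates {s} {v} Y := by
  classical
  induction e using Sym2.ind with | _ u₀ v₀ => ?_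
  have huv : u₀ ≠ v₀ := G.ne_of_adj he
  obtain ⟨a, ha, b, hb, π, hπ⟩ := not_separates_iff.mp hG
  have hmeet : ∃ x ∈ π.support, x ∈ ({u₀, v₀} : Set V) := by
    by_contra! hno
    have hu : u₀ ∉ π.support := fun h => hno u₀ h (by simp)
    obtain ⟨x, hx, hxs⟩ :=
      hs a ha b hb (π.toDeleteEdge _ fun h => hu (π.fst_mem_support_of_mem_edges h))
    exact hπ x (by simpa using hx) hxs
  obtain ⟨c₁, hc₁, hc₁π, h₁⟩ := π.exists_mem_set_forall_mem_takeUntil_imp_eq hmeet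
  obtain ⟨c₂, hc₂, hc₂π, h₂⟩ := π.reverse.exists_mem_set_forall_mem_takeUntil_imp_eq
    (by obtain ⟨x, hx, hx'⟩ := hmeet; exact ⟨x, by simpa [Walk.support_reverse] using hx, hx'⟩)
  let ρ := (π.takeUntil c₁ hc₁π).toDeleteEdge _
    ((π.takeUntil c₁ hc₁π).mk_notMem_edges_of_forall_mem_imp_eq (by simp) (by simp) huv h₁)
  let σ := (π.reverse.takeUntil c₂ hc₂π).toDeleteEdge _
    ((π.reverse.takeUntil c₂ hc₂π).mk_notMem_edges_of_forall_mem_imp_eq (by simp) (by simp) huv h₂)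
  have hρ : ∀ x ∈ ρ.support, x ∉ ({s} : Set V) := fun x hx =>
    hπ x (π.support_takeUntil_subset_support hc₁π (by simpa [ρ] using hx))
  have hσ : ∀ x ∈ σ.reverse.support, x ∉ ({s} : Set V) := fun x hx => hπ x (by
    simpa [σ, Walk.support_reverse] using
      π.reverse.support_takeUntil_subset_support hc₂π (by simpa [σ, Walk.support_reverse] using hx))
  have hc : c₁ ≠ c₂ := by
    rintro rfl
    obtain ⟨x, hx, hxs⟩ := hs a ha b hb (ρ.append σ.reverse)
    rcases (Walk.mem_support_append_iff _ _).mp hx with hx | hx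
    exacts [hρ x hx hxs, hσ x hx hxs]
  refine ⟨c₁, c₂, ?_, not_separates_iff.mpr ⟨a, ha, c₁, rfl, ρ, hρ⟩,
    not_separates_iff.mpr ⟨c₂, rfl, b, hb, σ.reverse, hσ⟩⟩
  simp only [Set.mem_insert_iff, Set.mem_singleton_iff] at hc₁ hc₂
  rcases hc₁ with rfl | rfl <;> rcases hc₂ with rfl | rfl
  exacts [absurd rfl hc, rfl, Sym2.eq_swap, absurd rfl hc]

theorem not_separates_pair_of_separates_deleteEdges (he : e = s(u, v)) (huv : u ≠ v)
    (hsv : s ≠ v) (hs : (G.deleteEdges {e}).Separates {s} X Y)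
    (hσ : ¬ (G.deleteEdges {e}).Separates {s} {v} Y) {R : Set V} (hG : ¬ G.Separates R X Y) :
    ¬ (G.deleteEdges {e}).Separates R X {s, u} := by
  classical
  subst he
  obtain ⟨v', hv', b, hb, σ, hσ⟩ := not_separates_iff.mp hσ
  rw [Set.mem_singleton_iff] at hv'
  subst v'
  obtain ⟨a, ha, b', hb', π, hπ⟩ := not_separates_iff.mp hG
  intro hR
  have hmeet : ∃ x ∈ π.support, x ∈ ({s, u, v} : Set V) := by
    by_contra! hno
    have hu : u ∉ π.support := fun h => hno u h (by simp)
    obtain ⟨x, hx, hxs⟩ :=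
      hs a ha b' hb' (π.toDeleteEdge _ fun h => hu (π.fst_mem_support_of_mem_edges h))
    exact hno x (by simpa using hx) (by simp_all)
  obtain ⟨c, hc, hcπ, hfirst⟩ := π.exists_mem_set_forall_mem_takeUntil_imp_eq hmeet
  let τ := (π.takeUntil c hcπ).toDeleteEdge _
    ((π.takeUntil c hcπ).mk_notMem_edges_of_forall_mem_imp_eq (by simp) (by simp) huv hfirst)
  by_cases hcv : c = v
  · subst hcv
    obtain ⟨x, hx, rfl⟩ := hs a ha b hb (τ.append σ)
    rcases (Walk.mem_support_append_iff _ _).mp hx with hx | hx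
    · exact hsv (hfirst x (by simpa [τ] using hx) (by simp))
    · exact hσ x hx rfl
  · obtain ⟨x, hx, hxR⟩ := hR a ha c (by simpa [hcv] using hc) τ
    exact hπ x (π.support_takeUntil_subset_support hcπ (by simpa [τ] using hx)) hxR

theorem hasTwoDisjointPaths_of_separates_deleteEdges (hadj : G.Adj u v) (hsu : s ≠ u)
    (hsv : s ≠ v) (hs : (G.deleteEdges {s(u, v)}).Separates {s} X Y)
    (hX : (G.deleteEdges {s(u, v)}).HasTwoDisjointPaths X {s, u})
    (hY : (G.deleteEdges {s(u, v)}).HasTwoDisjointPaths Y {s, v}) :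
    G.HasTwoDisjointPaths X Y := by
  obtain ⟨a₁, a₂, αs, αu, hαs, hαu, hα⟩ := hX.exists_of_pair
  obtain ⟨b₁, b₂, βs, βv, hβs, hβv, hβ⟩ := hY.exists_of_pair
  have hsαu : s ∉ αu.support := fun h => hsu ((hαu.2.2 s h).mp (by simp))
  have hsβv : s ∉ βv.support := fun h => hsv ((hβv.2.2 s h).mp (by simp))
  have ha₁ : a₁ ∈ X := (hαs.2.1 _ αs.start_mem_support).mpr rfl
  have ha₂ : a₂ ∈ X := (hαu.2.1 _ αu.start_mem_support).mpr rfl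
  have hb₁ : b₁ ∈ Y := (hβs.2.1 _ βs.start_mem_support).mpr rfl
  have hb₂ : b₂ ∈ Y := (hβv.2.1 _ βv.start_mem_support).mpr rfl
  have hle := G.deleteEdges_le {s(u, v)}
  let W₁ : G.Walk a₁ b₁ := (αs.append βs.reverse).mapLe hle
  let W₂ : G.Walk a₂ b₂ := (αu.mapLe hle).append (.cons hadj (βv.reverse.mapLe hle))
  have hW₁ : ∀ x ∈ W₁.support, x ∈ αs.support ∨ x ∈ βs.support := by
    simp [W₁, Walk.mem_support_append_iff, Walk.support_reverse]
  have hW₂ : ∀ x ∈ W₂.support, x ∈ αu.support ∨ x ∈ βv.support := by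
    simp only [W₂, Walk.mem_support_append_iff, Walk.support_mapLe_eq_support, Walk.support_cons,
      Walk.support_reverse, List.mem_cons, List.mem_reverse]
    rintro x (hx | rfl | hx)
    exacts [.inl hx, .inl αu.end_mem_support, .inr hx]
  have hdisj : W₁.support.Disjoint W₂.support := by
    intro x hx₁ hx₂
    rcases hW₁ x hx₁ with h₁ | h₁ <;> rcases hW₂ x hx₂ with h₂ | h₂
    · exact hα h₁ h₂
    · exact hs.disjoint_support ha₁ hb₂ hαs.1 βv hsβv h₁ h₂
    · exact (separates_comm.mp hs).disjoint_support hb₁ ha₂ hβs.1 αu hsαu h₁ h₂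
    · exact hβ h₁ h₂
  obtain ⟨c₁, d₁, q₁, hq₁, hq₁W⟩ := W₁.exists_isPathBetween ha₁ hb₁
  obtain ⟨c₂, d₂, q₂, hq₂, hq₂W⟩ := W₂.exists_isPathBetween ha₂ hb₂
  exact ⟨c₁, d₁, c₂, d₂, q₁, q₂, hq₁, hq₂, fun x h₁ h₂ => hdisj (hq₁W h₁) (hq₂W h₂)⟩

theorem hasTwoDisjointPaths_of_edgeSet_eq_empty (hE : G.edgeSet = ∅)
    (h : ∀ S : Set V, S.Subsingleton → ¬ G.Separates S X Y) : G.HasTwoDisjointPaths X Y := by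
  have heq : ∀ {a b : V} (p : G.Walk a b), a = b := fun p => by
    cases p with
    | nil => rfl
    | cons hadj _ => exact absurd (G.mem_edgeSet.mpr hadj) (by simp [hE])
  obtain ⟨a, ha, b, hb, p, -⟩ := not_separates_iff.mp (h ∅ Set.subsingleton_empty)
  obtain rfl := heq p
  obtain ⟨a', ha', b', hb', p', hp'⟩ :=
    not_separates_iff.mp (h {a} Set.subsingleton_singleton)
  obtain rfl := heq p'
  refine ⟨a, a, a', a', .nil, .nil, ?_, ?_, ?_⟩
  · simp [Walk.IsPathBetween, ha, hb]
  · simp [Walk.IsPathBetween, ha', hb']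
  · simpa using fun h => hp' a' p'.start_mem_support (by simp [h])

/-- Menger's theorem for two paths, proved by induction on the edges: if deleting an edge `uv`
creates a separating vertex `s`, apply induction between `X` and `{s, u}` and between `{s, v}`
and `Y`, and join the resulting paths through `s` and through `uv`. -/
theorem hasTwoDisjointPaths_of_forall_not_separates [Finite V]
    (h : ∀ S : Set V, S.Subsingleton → ¬ G.Separates S X Y) : G.HasTwoDisjointPaths X Y := by
  induction G using WellFoundedLT.induction generalizing X Y with
  | _ G ih =>
  obtain hE | ⟨e, he⟩ := G.edgeSet.eq_empty_or_nonempty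
  · exact hasTwoDisjointPaths_of_edgeSet_eq_empty hE h
  have hlt : G.deleteEdges {e} < G := lt_of_le_of_ne (G.deleteEdges_le _) fun h' =>
    Set.disjoint_singleton_right.mp (deleteEdges_eq_self.mp h') he
  by_cases h' : ∀ S : Set V, S.Subsingleton → ¬ (G.deleteEdges {e}).Separates S X Y
  · exact (ih _ hlt h').mono (G.deleteEdges_le _)
  push Not at h'
  obtain ⟨S, hS, hsep⟩ := h'
  obtain ⟨s, rfl⟩ : ∃ s, S = {s} := by
    rcases hS.eq_empty_or_singleton with rfl | hs
    · refine absurd (hsep.insert_of_deleteEdges (Sym2.out_fst_mem e)) ?_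
      simpa using h _ Set.subsingleton_singleton
    · exact hs
  have hse : s ∉ e := fun hse =>
    h {s} Set.subsingleton_singleton (by simpa using hsep.insert_of_deleteEdges hse)
  obtain ⟨u, v, rfl, hρ, hσ⟩ :=
    exists_ends_of_separates_deleteEdges hsep (h {s} Set.subsingleton_singleton) he
  have hadj : G.Adj u v := he
  have hsu : s ≠ u := fun h => hse (h ▸ Sym2.mem_mk_left _ _)
  have hsv : s ≠ v := fun h => hse (h ▸ Sym2.mem_mk_right _ _)
  refine hasTwoDisjointPaths_of_separates_deleteEdges hadj hsu hsv hsep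
    (ih _ hlt fun R hR => ?_) (ih _ hlt fun R hR => ?_)
  · exact not_separates_pair_of_separates_deleteEdges rfl hadj.ne hsv hsep hσ (h R hR)
  · exact not_separates_pair_of_separates_deleteEdges Sym2.eq_swap hadj.ne.symm hsu
      (separates_comm.mp hsep) (separates_comm.not.mp hρ) (separates_comm.not.mp (h R hR))

theorem exists_isPath_length_mod_two_of_odd_cycle [Finite V]
    (hconn : ∀ S : Set V, S.ncard < 2 → (G.induce Sᶜ).Connected) (hxy : x ≠ y)
    {c : G.Walk u u} (hc : c.IsCycle) (hodd : Odd c.length) (hcxy : s(x, y) ∉ c.edges) (k : ℕ) :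
    ∃ r : G.Walk x y, r.IsPath ∧ s(x, y) ∉ r.edges ∧ r.length % 2 = k % 2 := by
  have hlink : G.HasTwoDisjointPaths {z | z ∈ c.support} {x, y} := by
    refine (hasTwoDisjointPaths_of_forall_not_separates fun S hS => ?_).symm
    refine not_separates_of_connected_induce_compl
      (hconn S (by have := Set.ncard_le_one_iff_subsingleton.mpr hS; omega)) ?_ ?_
    · exact Set.not_subset.mp fun h => hxy (hS.anti h (by simp) (by simp))
    · refine Set.not_subset.mp fun h => (c.adj_snd hc.not_nil).ne (hS.anti h ?_ ?_)
      exacts [c.start_mem_support, c.getVert_mem_support 1]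
  obtain ⟨c₁, c₂, p, q, hp, hq, hpq⟩ := hlink.exists_of_pair
  have hc₁ : c₁ ∈ c.support := (hp.2.1 _ p.start_mem_support).mpr rfl
  have hc₂ : c₂ ∈ c.support := (hq.2.1 _ q.start_mem_support).mpr rfl
  have hc₁₂ : c₁ ≠ c₂ := fun h => hpq p.start_mem_support (h ▸ q.start_mem_support)
  obtain ⟨d₁, d₂, hd₁, hd₂, hd₁c, hd₂c, hd₁e, hd₂e, hlen⟩ := hc.exists_arcs hc₁ hc₂ hc₁₂
  obtain ⟨hr₁, hr₁xy⟩ := hp.isPath_append_append hq hpq hxy hd₁ hd₁c fun h => hcxy (hd₁e h)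
  obtain ⟨hr₂, hr₂xy⟩ := hp.isPath_append_append hq hpq hxy hd₂ hd₂c fun h => hcxy (hd₂e h)
  obtain ⟨m, hm⟩ := hodd
  by_cases hk : (p.length + d₁.length + q.length) % 2 = k % 2
  · exact ⟨_, hr₁, hr₁xy, by simp only [Walk.length_append, Walk.length_reverse]; omega⟩
  · exact ⟨_, hr₂, hr₂xy, by simp only [Walk.length_append, Walk.length_reverse]; omega⟩

theorem exists_isPath_length_mod_two_of_kConnected (hx : x ∈ S) (hy : y ∈ S) (hxy : x ≠ y)
    (hconn : KConnected 2 ((G ⊔ fromEdgeSet {s(x, y)}).induce S))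
    (hodd : ¬ ((G.deleteEdges {s(x, y)}).induce S).Colorable 2) (k : ℕ) :
    ∃ r : G.Walk x y, r.IsPath ∧ (∀ v ∈ r.support, v ∈ S) ∧ r.length % 2 = k % 2 := by
  set H := (G ⊔ fromEdgeSet {s(x, y)}).induce S
  set K := (G.deleteEdges {s(x, y)}).induce S
  -- `Nat.card` of an infinite type is `0`, so `KConnected` forces `S` to be finite.
  have : Finite S := Nat.finite_of_card_ne_zero (by have := hconn.1; omega)
  let x' : S := ⟨x, hx⟩
  let y' : S := ⟨y, hy⟩
  have hxy' : x' ≠ y' := fun h => hxy (congrArg Subtype.val h)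
  have hKH : K ≤ H := fun a b hab => Or.inl hab.1
  have hHK : ∀ e ∈ H.edgeSet, e ≠ s(x', y') → e ∈ K.edgeSet := by
    intro e he hne
    induction e using Sym2.ind with | _ a b => ?_
    have hval : s((a : V), b) ≠ s(x, y) := fun h =>
      hne (Sym2.map.injective Subtype.val_injective (by simpa using h))
    simp only [mem_edgeSet, H, K, comap_adj, sup_adj, fromEdgeSet_adj, deleteEdges_adj,
      Set.mem_singleton_iff] at he ⊢
    exact ⟨he.resolve_right fun h => hval h.1, hval⟩
  obtain ⟨w, c, hc, hcodd⟩ := exists_isCycle_odd_length_of_not_colorable_two hodd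
  have hcxy : s(x', y') ∉ (c.mapLe hKH).edges := fun h => by
    rw [Walk.edges_mapLe_eq_edges] at h
    simpa [K, x', y'] using c.edges_subset_edgeSet h
  obtain ⟨r, hr, hrxy, hrk⟩ := exists_isPath_length_mod_two_of_odd_cycle hconn.2 hxy'
    ((Walk.isCycle_mapLe hKH).mpr hc) (by simpa using hcodd) hcxy k
  let rK : K.Walk x' y' := r.transfer K fun e he =>
    hHK e (r.edges_subset_edgeSet he) (ne_of_mem_of_not_mem he hrxy)
  obtain ⟨rD, hrD, hrDS, hrDlen⟩ : ∃ rD : (G.deleteEdges {s(x, y)}).Walk x y,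
      rD.IsPath ∧ (∀ v ∈ rD.support, v ∈ S) ∧ rD.length = r.length :=
    ⟨rK.map (Embedding.induce S).toHom, (hr.transfer _).map Subtype.val_injective,
      fun v hv => by
        replace hv : v ∈ (rK.map (Embedding.induce S).toHom).support := hv
        rw [Walk.support_map, List.mem_map] at hv
        obtain ⟨⟨v, hv⟩, -, rfl⟩ := hv
        exact hv,
      (Walk.length_map _ _).trans (Walk.length_transfer _ _)⟩
  exact ⟨rD.mapLe (G.deleteEdges_le _), (Walk.isPath_mapLe _).mpr hrD,
    by simpa [Walk.support_mapLe_eq_support] using hrDS, by simpa [hrDlen]⟩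

end SimpleGraph

theorem stmt_18_general {V : Type*} (G : SimpleGraph V) (x y : V) (hxy : x ≠ y)
    (A B : Set V) (hAB : Disjoint A B)
    (hpaths : ∃ p q : G.Walk x y, p.IsPath ∧ q.IsPath ∧
      (∀ v ∈ p.support, v ∈ A ∪ {x, y}) ∧ (∀ v ∈ q.support, v ∈ A ∪ {x, y}) ∧
      s(x, y) ∉ p.edges ∧ s(x, y) ∉ q.edges ∧ q.length = p.length + 2)
    (hnonbip : ¬ ((G.deleteEdges {s(x, y)}).induce (B ∪ {x, y})).Colorable 2)
    (h2conn : KConnected 2 ((G ⊔ fromEdgeSet {s(x, y)}).induce (B ∪ {x, y}))) :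
    HasTwoConsecEvenCycles G := by
  obtain ⟨p, q, hp, hq, hpA, hqA, hpxy, hqxy, hqp⟩ := hpaths
  obtain ⟨r, hr, hrB, hrp⟩ := exists_isPath_length_mod_two_of_kConnected (by simp) (by simp)
    hxy h2conn hnonbip p.length
  have hmeet : ∀ w : G.Walk x y, (∀ v ∈ w.support, v ∈ A ∪ {x, y}) →
      ∀ v ∈ w.support, v ∈ r.support → v = x ∨ v = y := by
    intro w hw v hv hvr
    rcases hw v hv with hvA | hvxy
    · rcases hrB v hvr with hvB | hvxy
      · exact absurd hvB (Set.disjoint_left.mp hAB hvA)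
      · simpa using hvxy
    · simpa using hvxy
  have hp2 := Walk.two_le_length_of_mk_notMem_edges hxy hpxy
  refine ⟨x, x, p.append r.reverse, q.append r.reverse, (p.length + r.length) / 2,
    hp.isCycle_append_reverse hr hxy hpxy (hmeet p hpA),
    hq.isCycle_append_reverse hr hxy hqxy (hmeet q hqA), by omega, ?_, ?_⟩ <;>
  simp only [Walk.length_append, Walk.length_reverse] <;> omega

/-- Let `G` be 2-connected with a 2-cut `{x,y}` separating `V ∖ {x,y}` into nonempty
parts `A` and `B` with no edges between them. If the part `H₁` (on `A ∪ {x,y}`) minus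
the edge `xy` contains two `x`–`y` paths whose lengths differ by 2, and the part `H₂`
(on `B ∪ {x,y}`) minus `xy` is non-bipartite and becomes 2-connected after adding `xy`,
then `G` contains two cycles of consecutive even lengths. -/
theorem stmt_18 {V : Type*} [Fintype V] (G : SimpleGraph V) (x y : V) (hxy : x ≠ y)
    (h2 : KConnected 2 G)
    (A B : Set V) (hA : A.Nonempty) (hB : B.Nonempty) (hAB : Disjoint A B)
    (hxA : x ∉ A ∪ B) (hyA : y ∉ A ∪ B)
    (hcover : A ∪ B ∪ {x, y} = Set.univ)
    (hsep : ∀ a ∈ A, ∀ b ∈ B, ¬ G.Adj a b)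
    (hpaths : ∃ p q : G.Walk x y, p.IsPath ∧ q.IsPath ∧
      (∀ v ∈ p.support, v ∈ A ∪ {x, y}) ∧ (∀ v ∈ q.support, v ∈ A ∪ {x, y}) ∧
      s(x, y) ∉ p.edges ∧ s(x, y) ∉ q.edges ∧ q.length = p.length + 2)
    (hnonbip : ¬ ((G.deleteEdges {s(x, y)}).induce (B ∪ {x, y})).Colorable 2)
    (h2conn : KConnected 2 ((G ⊔ fromEdgeSet {s(x, y)}).induce (B ∪ {x, y}))) :
    HasTwoConsecEvenCycles G :=
  stmt_18_general G x y hxy A B hAB hpaths hnonbip h2conn
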